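/- Let X be a Banach space whose numerical index equals 1. If X has the Bishop–Phelps–Bollobás property for the numerical radius (BPBp-nu), then X has property (nu). -/

import Mathlib

/-!
Given `T` with `‖T‖ = 1` and a pair `(x₀, f₀)` that is almost in `Π(X)` with `|f₀ (T x₀)| = 1`,
the Bishop–Phelps–Bollobás theorem moves `(x₀, f₀)` to a nearby pair `(z, g) ∈ Π(X)`, where
`|g (T z)|` is still close to `1`. Since `n(X) = 1`, the numerical radius equals the norm, so
`ν(T) = 1` and the BPBp-nu yields `S` and `(x₁, f₁) ∈ Π(X)` close to `T` and `(z, g)`, with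
`‖S‖ = ν(S) = 1`.

The Bishop–Phelps–Bollobás theorem itself comes from Ekeland's variational principle for `-Re f₀`
on the unit sphere, which produces a point `y` where `Re f₀` satisfies a cone condition; a
Hahn–Banach argument for the infimal convolution of `‖·‖` and `Re f₀ + ε ‖·‖` then gives a
norming functional at `y` that is `ε`-close to `Re f₀`.
-/

/-- The numerical radius of a bounded linear operator on a normed space. -/
noncomputable def numRadius {𝕂 : Type*} [RCLike 𝕂] {Z : Type*} [NormedAddCommGroup Z]
    [NormedSpace 𝕂 Z] (T : Z →L[𝕂] Z) : ℝ :=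
  sSup { r : ℝ | ∃ (z : Z) (f : Z →L[𝕂] 𝕂), ‖z‖ = 1 ∧ ‖f‖ = 1 ∧ f z = 1 ∧ r = ‖f (T z)‖ }

/-- The numerical index of a normed space. -/
noncomputable def numIndex (𝕂 : Type*) [RCLike 𝕂] (Z : Type*) [NormedAddCommGroup Z]
    [NormedSpace 𝕂 Z] : ℝ :=
  sInf { r : ℝ | ∃ T : Z →L[𝕂] Z, ‖T‖ = 1 ∧ r = numRadius T }

/-- Property (nu) for a normed space. -/
def PropertyNu (𝕂 : Type*) [RCLike 𝕂] (X : Type*) [NormedAddCommGroup X]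
    [NormedSpace 𝕂 X] : Prop :=
  ∀ ε : ℝ, 0 < ε → ∃ η : ℝ, 0 < η ∧
    ∀ (T : X →L[𝕂] X) (x₀ : X) (f₀ : X →L[𝕂] 𝕂),
      ‖T‖ = 1 → ‖x₀‖ = 1 → ‖f₀‖ = 1 → 1 - η < RCLike.re (f₀ x₀) → ‖f₀ (T x₀)‖ = 1 →
      ∃ (S : X →L[𝕂] X) (x₁ : X) (f₁ : X →L[𝕂] 𝕂),
        ‖S‖ = 1 ∧ ‖x₁‖ = 1 ∧ ‖f₁‖ = 1 ∧ ‖f₁ (S x₁)‖ = 1 ∧ f₁ x₁ = 1 ∧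
        ‖x₁ - x₀‖ < ε ∧ ‖f₁ - f₀‖ < ε ∧ ‖S - T‖ < ε

/-- The Bishop–Phelps–Bollobás property for the numerical radius (BPBp-nu). -/
def BPBpNu (𝕂 : Type*) [RCLike 𝕂] (Z : Type*) [NormedAddCommGroup Z]
    [NormedSpace 𝕂 Z] : Prop :=
  ∀ ε : ℝ, 0 < ε → ε < 1 → ∃ η : ℝ, 0 < η ∧
    ∀ (T : Z →L[𝕂] Z) (z₀ : Z) (f₀ : Z →L[𝕂] 𝕂),
      numRadius T = 1 → ‖z₀‖ = 1 → ‖f₀‖ = 1 → f₀ z₀ = 1 → 1 - η < ‖f₀ (T z₀)‖ →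
      ∃ (S : Z →L[𝕂] Z) (z₁ : Z) (f₁ : Z →L[𝕂] 𝕂),
        ‖z₁‖ = 1 ∧ ‖f₁‖ = 1 ∧ f₁ z₁ = 1 ∧ numRadius S = 1 ∧ ‖f₁ (S z₁)‖ = 1 ∧
        ‖S - T‖ < ε ∧ ‖z₁ - z₀‖ < ε ∧ ‖f₁ - f₀‖ < ε

open Filter Topology Set Metric

section Ekeland

variable {α : Type*} [MetricSpace α] {φ : α → ℝ} {ε : ℝ}

def ekelandSet (φ : α → ℝ) (ε : ℝ) (z : α) : Set α :=
  {x | φ x + ε * dist x z ≤ φ z}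

lemma self_mem_ekelandSet (z : α) : z ∈ ekelandSet φ ε z := by
  simp [ekelandSet]

lemma ekelandSet_subset (hε : 0 ≤ ε) {z w : α} (hw : w ∈ ekelandSet φ ε z) :
    ekelandSet φ ε w ⊆ ekelandSet φ ε z := fun x hx => by
  have := mul_le_mul_of_nonneg_left (dist_triangle x w z) hε
  simp only [ekelandSet, mem_ofPred_eq] at hw hx ⊢
  linarith

lemma isClosed_ekelandSet (hφ : LowerSemicontinuous φ) (z : α) :
    IsClosed (ekelandSet φ ε z) :=
  (hφ.add (continuous_const.mul (continuous_id.dist continuous_const)).lowerSemicontinuous)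
    |>.isClosed_preimage (φ z)

lemma exists_mem_ekelandSet_forall_dist_le (hbdd : BddBelow (range φ)) (hε : 0 ≤ ε) (z : α)
    {δ : ℝ} (hδ : 0 < δ) :
    ∃ w ∈ ekelandSet φ ε z, ∀ x ∈ ekelandSet φ ε w, ε * dist x w ≤ δ := by
  obtain ⟨_, ⟨w, hw, rfl⟩, hlt⟩ := exists_lt_of_csInf_lt (s := φ '' ekelandSet φ ε z)
    ⟨_, z, self_mem_ekelandSet z, rfl⟩ (lt_add_of_pos_right _ hδ)
  refine ⟨w, hw, fun x hx => ?_⟩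
  have hinf : sInf (φ '' ekelandSet φ ε z) ≤ φ x :=
    csInf_le (hbdd.mono (image_subset_range _ _)) ⟨x, ekelandSet_subset hε hw hx, rfl⟩
  have : φ x + ε * dist x w ≤ φ w := hx
  linarith

/-- **Ekeland's variational principle**. -/
theorem exists_le_add_mul_dist_of_lowerSemicontinuous [CompleteSpace α]
    (hφ : LowerSemicontinuous φ) (hbdd : BddBelow (range φ)) (hε : 0 < ε) (x₀ : α) :
    ∃ y, φ y + ε * dist y x₀ ≤ φ x₀ ∧ ∀ x, φ y ≤ φ x + ε * dist x y := by
  choose next next_mem next_small using fun (z : α) (n : ℕ) =>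
    exists_mem_ekelandSet_forall_dist_le hbdd hε.le z (pow_pos (one_half_pos (α := ℝ)) n)
  let F : ℕ → α := fun n => Nat.rec x₀ (fun k z => next z k) n
  have F_mem : ∀ {n m}, n ≤ m → F m ∈ ekelandSet φ ε (F n) := by
    intro n m hnm
    induction hnm with
    | refl => exact self_mem_ekelandSet _
    | step _ ih => exact ekelandSet_subset hε.le ih (next_mem _ _)
  have F_small : ∀ n, ∀ x ∈ ekelandSet φ ε (F (n + 1)), dist x (F (n + 1)) ≤ (1 / 2) ^ n / ε :=
    fun n x hx => by rw [le_div_iff₀ hε, mul_comm]; exact next_small _ _ x hx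
  have hlim : Tendsto (fun n : ℕ => ((1 : ℝ) / 2) ^ n / ε) atTop (𝓝 0) := by
    simpa using (tendsto_pow_atTop_nhds_zero_of_lt_one (by norm_num) one_half_lt_one).div_const ε
  obtain ⟨y, hy⟩ := cauchySeq_tendsto_of_complete <|
    cauchySeq_of_le_tendsto_0' (s := fun n => F (n + 1)) _
      (fun n m hnm => by rw [dist_comm]; exact F_small n _ (F_mem (Nat.succ_le_succ hnm))) hlim
  have y_mem : ∀ n, y ∈ ekelandSet φ ε (F n) := fun n =>
    (isClosed_ekelandSet hφ _).mem_of_tendsto hy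
      ((eventually_ge_atTop n).mono fun m hm => F_mem (hm.trans m.le_succ))
  refine ⟨y, y_mem 0, fun x => ?_⟩
  by_contra! hlt
  -- `x` and `y` both lie in the shrinking sets `ekelandSet φ ε (F n)`, so they coincide
  have x_mem : ∀ n, x ∈ ekelandSet φ ε (F n) := fun n => ekelandSet_subset hε.le (y_mem n) hlt.le
  have hxy : dist x y ≤ 2 * 0 := ge_of_tendsto' (hlim.const_mul 2) fun n => by
    linarith [dist_triangle_right x y (F (n + 1)), F_small n x (x_mem (n + 1)),
      F_small n y (y_mem (n + 1))]
  obtain rfl : x = y := dist_le_zero.mp (by simpa using hxy)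
  simp at hlt

end Ekeland

section Sublinear

variable {E : Type*} [AddCommGroup E] [Module ℝ E] {p q : E → ℝ}

structure IsSublinear (p : E → ℝ) : Prop where
  map_smul : ∀ c : ℝ, 0 < c → ∀ x, p (c • x) = c * p x
  map_add_le : ∀ x y, p (x + y) ≤ p x + p y

lemma IsSublinear.map_zero (hp : IsSublinear p) : p 0 = 0 := by
  have := hp.map_smul 2 two_pos 0
  rw [smul_zero] at this
  linarith

noncomputable def infConv (p q : E → ℝ) (x : E) : ℝ :=
  ⨅ w, p w + q (x - w)

lemma bddBelow_infConv (hq : IsSublinear q) (hpq : ∀ x, 0 ≤ p x + q (-x)) (x : E) :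
    BddBelow (range fun w => p w + q (x - w)) := by
  refine ⟨-q (-x), ?_⟩
  rintro _ ⟨w, rfl⟩
  have := hq.map_add_le (-x) (x - w)
  rw [show -x + (x - w) = -w by abel] at this
  linarith [hpq w]

lemma infConv_le (hq : IsSublinear q) (hpq : ∀ x, 0 ≤ p x + q (-x)) (x w : E) :
    infConv p q x ≤ p w + q (x - w) :=
  ciInf_le (bddBelow_infConv hq hpq x) w

lemma isSublinear_infConv (hp : IsSublinear p) (hq : IsSublinear q)
    (hpq : ∀ x, 0 ≤ p x + q (-x)) : IsSublinear (infConv p q) where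
  map_smul c hc x := by
    calc infConv p q (c • x) = ⨅ w, p (c • w) + q (c • x - c • w) :=
          ((MulAction.bijective₀ (α := E) hc.ne').surjective.iInf_comp
            fun w => p w + q (c • x - w)).symm
      _ = ⨅ w, c * (p w + q (x - w)) := by
          simp_rw [← smul_sub, hp.map_smul c hc, hq.map_smul c hc, mul_add]
      _ = c * infConv p q x := (Real.mul_iInf_of_nonneg hc.le _).symm
  map_add_le x y := le_ciInf_add_ciInf fun w₁ w₂ => by
    calc infConv p q (x + y) ≤ p (w₁ + w₂) + q ((x - w₁) + (y - w₂)) := by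
          convert infConv_le hq hpq (x + y) (w₁ + w₂) using 3; abel
      _ ≤ p w₁ + q (x - w₁) + (p w₂ + q (y - w₂)) := by
          linarith [hp.map_add_le w₁ w₂, hq.map_add_le (x - w₁) (y - w₂)]

theorem IsSublinear.exists_linearMap_eq_one_le (hp : IsSublinear p) (hq : IsSublinear q)
    (hpq : ∀ x, 0 ≤ p x + q (-x)) {y : E} (hpy : p y ≤ 1) (hy : ∀ w, 1 ≤ p w + q (y - w)) :
    ∃ v : E →ₗ[ℝ] ℝ, v y = 1 ∧ (∀ x, v x ≤ p x) ∧ ∀ x, v x ≤ q x := by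
  have hr := isSublinear_infConv hp hq hpq
  have hr_y : 1 ≤ infConv p q y := le_ciInf hy
  have hr_neg_y : -1 ≤ infConv p q (-y) := le_ciInf fun w => by
    rw [show -y - w = -(w + y) by abel]
    linarith [hp.map_add_le w y, hpq (w + y)]
  have hy0 : y ≠ 0 := by
    rintro rfl
    linarith [hr.map_zero]
  obtain ⟨v, hv_y, hv_le⟩ := exists_extension_of_le_sublinear
    (LinearPMap.mkSpanSingleton (K := ℝ) y (1 : ℝ) hy0) (infConv p q) hr.map_smul hr.map_add_le
    (by
      rintro ⟨_, hx⟩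
      obtain ⟨c, rfl⟩ := Submodule.mem_span_singleton.mp hx
      rw [LinearPMap.mkSpanSingleton'_apply, RingHom.id_apply, smul_eq_mul, mul_one]
      change c ≤ infConv p q (c • y)
      rcases lt_trichotomy c 0 with hc | rfl | hc
      · rw [← neg_neg c, neg_smul, ← smul_neg, hr.map_smul _ (neg_pos.mpr hc)]
        nlinarith
      · rw [zero_smul, hr.map_zero]
      · rw [hr.map_smul c hc]
        nlinarith)
  refine ⟨v, ?_, fun x => ?_, fun x => ?_⟩
  · exact (hv_y ⟨y, Submodule.mem_span_singleton_self y⟩).trans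
      (LinearPMap.mkSpanSingleton_apply ℝ ℝ hy0 1)
  · simpa [hq.map_zero] using (hv_le x).trans (infConv_le hq hpq x x)
  · simpa [hp.map_zero] using (hv_le x).trans (infConv_le hq hpq x 0)

end Sublinear

lemma abs_apply_le_of_forall_le {X F : Type*} [SeminormedAddCommGroup X] [FunLike F X ℝ]
    [AddMonoidHomClass F X ℝ] {f : F} {C : ℝ} (h : ∀ x, f x ≤ C * ‖x‖) (x : X) :
    |f x| ≤ C * ‖x‖ := by
  have := h (-x)
  rw [map_neg, norm_neg] at this
  exact abs_le.mpr ⟨by linarith, h x⟩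

section RealBishopPhelpsBollobas

variable {X : Type*} [NormedAddCommGroup X] [NormedSpace ℝ X] {u : X →L[ℝ] ℝ} {y : X} {l : ℝ}

lemma le_norm_mul_add_of_forall_norm_eq_one (h : ∀ x, ‖x‖ = 1 → u x ≤ u y + l * ‖x - y‖)
    (x : X) : u x ≤ ‖x‖ * u y + l * ‖x - ‖x‖ • y‖ := by
  rcases eq_or_ne x 0 with rfl | hx
  · simp
  have hpos : 0 < ‖x‖ := norm_pos_iff.mpr hx
  have hx' : ‖‖x‖⁻¹ • x‖ = 1 := by rw [norm_smul, norm_inv, norm_norm, inv_mul_cancel₀ hpos.ne']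
  have key := mul_le_mul_of_nonneg_left (h _ hx') hpos.le
  have e₁ : ‖x‖ * u (‖x‖⁻¹ • x) = u x := by
    rw [map_smul, smul_eq_mul, mul_inv_cancel_left₀ hpos.ne']
  have e₂ : ‖x‖ * ‖‖x‖⁻¹ • x - y‖ = ‖x - ‖x‖ • y‖ := by
    rw [← norm_norm x, ← norm_smul, norm_norm, smul_sub, smul_inv_smul₀ hpos.ne']
  rw [mul_add, e₁, mul_left_comm, e₂] at key
  exact key

lemma one_sub_norm_sub_le (hy : ‖y‖ = 1) (hl : 0 ≤ l) {η : ℝ} (huy : 1 - η < u y)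
    (huy₁ : u y ≤ 1) (h : ∀ x, u x ≤ ‖x‖ * u y + l * ‖x - ‖x‖ • y‖) (z : X) :
    1 - ‖y - z‖ ≤ u z + (2 * l + η) * ‖z‖ := by
  set s := ‖y - z‖
  have hs : |1 - s| ≤ ‖z‖ := by
    simpa [hy] using abs_norm_sub_norm_le y (y - z)
  have h₁ : ‖y - z - s • y‖ ≤ 2 * ‖z‖ :=
    calc ‖y - z - s • y‖ = ‖(1 - s) • y - z‖ := by rw [sub_smul, one_smul]; abel_nf
      _ ≤ |1 - s| + ‖z‖ := by
          simpa [norm_smul, hy] using norm_sub_le ((1 - s) • y) z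
      _ ≤ 2 * ‖z‖ := by linarith
  have h₂ : (1 - s) * (1 - u y) ≤ ‖z‖ * η :=
    (mul_le_mul_of_nonneg_right (le_abs_self _) (by linarith)).trans
      (mul_le_mul hs (by linarith) (by linarith) (norm_nonneg _))
  -- the cone condition at `y - z` gives `(1 - s) * u y ≤ u z + 2 * l * ‖z‖`
  have h₃ := h (y - z)
  rw [map_sub] at h₃
  nlinarith [mul_le_mul_of_nonneg_left h₁ hl]

theorem exists_norming_pair_near_real [CompleteSpace X] (hu : ‖u‖ ≤ 1) {x₀ : X}
    (hx₀ : ‖x₀‖ = 1) {η : ℝ} (hl : 0 < l) (hux₀ : 1 - η < u x₀) :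
    ∃ (y : X) (v : X →L[ℝ] ℝ), ‖y‖ = 1 ∧ ‖v‖ ≤ 1 ∧ v y = 1 ∧ l * ‖y - x₀‖ < η ∧
      ‖v - u‖ ≤ 2 * l + η := by
  have hu_le : ∀ x, u x ≤ ‖x‖ := fun x =>
    (le_abs_self _).trans ((u.le_opNorm x).trans (mul_le_of_le_one_left (norm_nonneg _) hu))
  have : CompleteSpace (sphere (0 : X) 1) := isClosed_sphere.completeSpace_coe
  obtain ⟨⟨y, hy⟩, hyx₀, hy_min⟩ := exists_le_add_mul_dist_of_lowerSemicontinuous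
    (φ := fun x : sphere (0 : X) 1 => -u x)
    (u.continuous.comp continuous_subtype_val).neg.lowerSemicontinuous
    ⟨-1, by rintro _ ⟨⟨x, hx⟩, rfl⟩; simp only [mem_sphere_zero_iff_norm] at hx; simp [← hx, hu_le]⟩
    hl ⟨x₀, by simpa using hx₀⟩
  rw [mem_sphere_zero_iff_norm] at hy
  simp only [Subtype.dist_eq, dist_eq_norm] at hyx₀ hy_min
  have huy₁ : u y ≤ 1 := hy ▸ hu_le y
  have hdist : l * ‖y - x₀‖ < η := by linarith
  have hη : 0 < η := by linarith [hu_le x₀]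
  have huy : 1 - η < u y := by linarith [mul_nonneg hl.le (norm_nonneg (y - x₀))]
  have hcone := le_norm_mul_add_of_forall_norm_eq_one (u := u) (y := y) (l := l) fun x hx => by
    linarith [hy_min ⟨x, by simpa using hx⟩]
  have hkey := one_sub_norm_sub_le hy hl.le huy huy₁ hcone
  obtain ⟨v, hv_y, hv_norm, hv_u⟩ := IsSublinear.exists_linearMap_eq_one_le
    (p := norm) (q := fun x => u x + (2 * l + η) * ‖x‖)
    ⟨fun c hc x => by rw [norm_smul, Real.norm_of_nonneg hc.le], norm_add_le⟩
    ⟨fun c hc x => by rw [map_smul, smul_eq_mul, norm_smul, Real.norm_of_nonneg hc.le]; ring,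
      fun x x' => by nlinarith [norm_add_le x x', map_add u x x']⟩
    (fun x => by nlinarith [hu_le x, norm_neg x, map_neg u x, norm_nonneg x])
    hy.le fun w => by
      have := hkey (y - w)
      rw [sub_sub_cancel] at this
      linarith
  let v' : X →L[ℝ] ℝ := v.mkContinuous 1 fun x => by
    simpa [Real.norm_eq_abs] using
      abs_apply_le_of_forall_le (f := v) (C := 1) (by simpa using hv_norm) x
  refine ⟨y, v', hy, v.mkContinuous_norm_le zero_le_one _, hv_y, hdist, ?_⟩
  refine ContinuousLinearMap.opNorm_le_bound _ (by positivity) fun x => ?_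
  rw [Real.norm_eq_abs]
  exact abs_apply_le_of_forall_le (fun x => show v x - u x ≤ _ by linarith [hv_u x]) x

end RealBishopPhelpsBollobas

section BishopPhelpsBollobas

open RCLike

variable {𝕂 : Type*} [RCLike 𝕂] {X : Type*} [NormedAddCommGroup X] [NormedSpace 𝕂 X]
  [CompleteSpace X]

theorem exists_norming_pair_near {f₀ : X →L[𝕂] 𝕂} (hf₀ : ‖f₀‖ ≤ 1) {x₀ : X} (hx₀ : ‖x₀‖ = 1)
    {η l : ℝ} (hl : 0 < l) (h : 1 - η < re (f₀ x₀)) :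
    ∃ (y : X) (g : X →L[𝕂] 𝕂), ‖y‖ = 1 ∧ ‖g‖ = 1 ∧ g y = 1 ∧ l * ‖y - x₀‖ < η ∧
      ‖g - f₀‖ ≤ 2 * l + η := by
  let : NormedSpace ℝ X := NormedSpace.restrictScalars ℝ 𝕂 X
  have : IsScalarTower ℝ 𝕂 X := RestrictScalars.isScalarTower ℝ 𝕂 X
  let e := StrongDual.extendRCLikeₗᵢ (𝕜 := 𝕂) (F := X)
  obtain ⟨y, v, hy, hv, hvy, hyx₀, hvf₀⟩ := exists_norming_pair_near_real
    (u := e.symm f₀) (by rwa [LinearIsometryEquiv.norm_map]) hx₀ hl h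
  have hgy : e v y = 1 := by
    have hre : re (e v y) = 1 := by
      simp [e, StrongDual.extendRCLikeₗᵢ_apply, hvy]
    have hle : ‖e v y‖ ≤ re (e v y) := by
      calc ‖e v y‖ ≤ ‖e v‖ * ‖y‖ := (e v).le_opNorm y
        _ ≤ re (e v y) := by rw [LinearIsometryEquiv.norm_map, hy, hre, mul_one]; exact hv
    rw [← re_eq_self_of_le hle, hre, ofReal_one]
  refine ⟨y, e v, hy, le_antisymm (by rwa [LinearIsometryEquiv.norm_map]) ?_, hgy, hyx₀, ?_⟩
  · calc (1 : ℝ) = ‖e v y‖ := by rw [hgy, norm_one]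
      _ ≤ ‖e v‖ * ‖y‖ := (e v).le_opNorm y
      _ = ‖e v‖ := by rw [hy, mul_one]
  · rwa [← e.apply_symm_apply f₀, ← map_sub, LinearIsometryEquiv.norm_map]

/-- **Bishop–Phelps–Bollobás theorem**. -/
theorem exists_pos_norming_pair_near {δ : ℝ} (hδ : 0 < δ) :
    ∃ η > 0, ∀ (x₀ : X) (f₀ : X →L[𝕂] 𝕂), ‖x₀‖ = 1 → ‖f₀‖ ≤ 1 → 1 - η < re (f₀ x₀) →
      ∃ (y : X) (g : X →L[𝕂] 𝕂), ‖y‖ = 1 ∧ ‖g‖ = 1 ∧ g y = 1 ∧ ‖y - x₀‖ < δ ∧ ‖g - f₀‖ < δ := by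
  have hη : δ * min δ 1 / 4 ≤ δ / 4 * δ := by
    nlinarith [min_le_left δ 1]
  have hη' : δ * min δ 1 / 4 ≤ δ / 4 := by
    nlinarith [min_le_right δ 1]
  refine ⟨δ * min δ 1 / 4, by positivity, fun x₀ f₀ hx₀ hf₀ h => ?_⟩
  obtain ⟨y, g, hy, hg, hgy, hyx₀, hgf₀⟩ :=
    exists_norming_pair_near hf₀ hx₀ (l := δ / 4) (by positivity) h
  refine ⟨y, g, hy, hg, hgy, ?_, by linarith⟩
  exact lt_of_mul_lt_mul_left (hyx₀.trans_le hη) (by positivity)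

end BishopPhelpsBollobas

section NumericalRadius

variable {𝕂 : Type*} [RCLike 𝕂] {X : Type*} [NormedAddCommGroup X] [NormedSpace 𝕂 X]

lemma exists_norming_pair [Nontrivial X] :
    ∃ (z : X) (f : X →L[𝕂] 𝕂), ‖z‖ = 1 ∧ ‖f‖ = 1 ∧ f z = 1 := by
  obtain ⟨x, hx⟩ := exists_ne (0 : X)
  have hz := norm_smul_inv_norm (𝕜 := 𝕂) hx
  obtain ⟨f, hf, hfz⟩ := exists_dual_vector 𝕂 _ (hz ▸ one_ne_zero)
  exact ⟨_, f, hz, hf, by rw [hfz, hz, RCLike.ofReal_one]⟩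

lemma norm_apply_apply_le_norm (T : X →L[𝕂] X) {z : X} {f : X →L[𝕂] 𝕂} (hz : ‖z‖ = 1)
    (hf : ‖f‖ = 1) : ‖f (T z)‖ ≤ ‖T‖ :=
  calc ‖f (T z)‖ ≤ ‖f‖ * (‖T‖ * ‖z‖) := f.le_opNorm_of_le (T.le_opNorm z)
    _ = ‖T‖ := by rw [hf, hz, one_mul, mul_one]

lemma norm_apply_apply_le_numRadius (T : X →L[𝕂] X) {z : X} {f : X →L[𝕂] 𝕂} (hz : ‖z‖ = 1)
    (hf : ‖f‖ = 1) (hfz : f z = 1) : ‖f (T z)‖ ≤ numRadius T :=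
  le_csSup ⟨‖T‖, by rintro _ ⟨z, f, hz, hf, -, rfl⟩; exact norm_apply_apply_le_norm T hz hf⟩
    ⟨z, f, hz, hf, hfz, rfl⟩

lemma numRadius_nonneg (T : X →L[𝕂] X) : 0 ≤ numRadius T :=
  Real.sSup_nonneg <| by rintro _ ⟨_, _, -, -, -, rfl⟩; exact norm_nonneg _

lemma numRadius_le_norm [Nontrivial X] (T : X →L[𝕂] X) : numRadius T ≤ ‖T‖ := by
  obtain ⟨z, f, hz, hf, hfz⟩ := exists_norming_pair (𝕂 := 𝕂) (X := X)
  refine csSup_le ⟨_, z, f, hz, hf, hfz, rfl⟩ ?_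
  rintro _ ⟨z, f, hz, hf, -, rfl⟩
  exact norm_apply_apply_le_norm T hz hf

lemma numRadius_smul_le [Nontrivial X] (c : 𝕂) (T : X →L[𝕂] X) :
    numRadius (c • T) ≤ ‖c‖ * numRadius T := by
  obtain ⟨z, f, hz, hf, hfz⟩ := exists_norming_pair (𝕂 := 𝕂) (X := X)
  refine csSup_le ⟨_, z, f, hz, hf, hfz, rfl⟩ ?_
  rintro _ ⟨z, f, hz, hf, hfz, rfl⟩
  rw [smul_apply, map_smul, smul_eq_mul, norm_mul]
  exact mul_le_mul_of_nonneg_left (norm_apply_apply_le_numRadius T hz hf hfz) (norm_nonneg c)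

lemma numRadius_eq_norm_of_numIndex_eq_one [Nontrivial X] (hX : numIndex 𝕂 X = 1)
    (T : X →L[𝕂] X) : numRadius T = ‖T‖ := by
  refine le_antisymm (numRadius_le_norm T) ?_
  rcases eq_or_ne T 0 with rfl | hT
  · simpa using numRadius_nonneg (0 : X →L[𝕂] X)
  have hpos : 0 < ‖T‖ := norm_pos_iff.mpr hT
  have hindex : 1 ≤ numRadius ((‖T‖⁻¹ : 𝕂) • T) :=
    hX ▸ csInf_le ⟨0, by rintro _ ⟨S, -, rfl⟩; exact numRadius_nonneg S⟩
      ⟨_, norm_smul_inv_norm hT, rfl⟩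
  have := hindex.trans (numRadius_smul_le _ T)
  rw [norm_inv, RCLike.norm_ofReal, abs_norm, le_inv_mul_iff₀ hpos, mul_one] at this
  exact this

lemma norm_apply_apply_sub_le {Y : Type*} [NormedAddCommGroup Y] [NormedSpace 𝕂 Y]
    (T : X →L[𝕂] Y) (f g : Y →L[𝕂] 𝕂) (x z : X) :
    ‖f (T x) - g (T z)‖ ≤ ‖f - g‖ * (‖T‖ * ‖x‖) + ‖g‖ * (‖T‖ * ‖x - z‖) :=
  calc ‖f (T x) - g (T z)‖ = ‖(f - g) (T x) + g (T (x - z))‖ := by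
        rw [sub_apply, map_sub, map_sub]; abel_nf
    _ ≤ _ := (norm_add_le _ _).trans <|
        add_le_add ((f - g).le_opNorm_of_le (T.le_opNorm x)) (g.le_opNorm_of_le (T.le_opNorm _))

end NumericalRadius

/-- If `n(X) = 1` and `X` has the BPBp-nu, then `X` has property (nu). -/
theorem propertyNu_of_bpbpnu (𝕂 : Type*) [RCLike 𝕂] (X : Type*)
    [NormedAddCommGroup X] [NormedSpace 𝕂 X] [CompleteSpace X]
    (hX : numIndex 𝕂 X = 1) (h : BPBpNu 𝕂 X) : PropertyNu 𝕂 X := by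
  intro ε hε
  obtain ⟨η', hη', hbp⟩ := h (min ε 1 / 2) (by positivity) (by linarith [min_le_right ε 1])
  obtain ⟨η, hη, hbpb⟩ :=
    exists_pos_norming_pair_near (𝕂 := 𝕂) (X := X) (δ := min (ε / 4) (η' / 2)) (by positivity)
  refine ⟨η, hη, fun T x₀ f₀ hT hx₀ hf₀ hre hTx₀ => ?_⟩
  have : Nontrivial X := ⟨x₀, 0, norm_ne_zero_iff.mp (by rw [hx₀]; exact one_ne_zero)⟩
  obtain ⟨z, g, hz, hg, hgz, hzx₀, hgf₀⟩ := hbpb x₀ f₀ hx₀ hf₀.le hre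
  have hgTz : 1 - η' < ‖g (T z)‖ := by
    have := norm_apply_apply_sub_le T f₀ g x₀ z
    rw [hT, hx₀, hg, norm_sub_rev f₀, norm_sub_rev x₀] at this
    linarith [norm_sub_norm_le (f₀ (T x₀)) (g (T z)), min_le_right (ε / 4) (η' / 2)]
  obtain ⟨S, z₁, f₁, hz₁, hf₁, hf₁z₁, hνS, hSz₁, hST, hz₁z, hf₁g⟩ :=
    hbp T z g ((numRadius_eq_norm_of_numIndex_eq_one hX T).trans hT) hz hg hgz hgTz
  refine ⟨S, z₁, f₁, (numRadius_eq_norm_of_numIndex_eq_one hX S).symm.trans hνS, hz₁, hf₁, hSz₁,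
    hf₁z₁, ?_, ?_, ?_⟩ <;>
  linarith [norm_sub_le_norm_sub_add_norm_sub z₁ z x₀, norm_sub_le_norm_sub_add_norm_sub f₁ g f₀,
    min_le_left ε 1, min_le_left (ε / 4) (η' / 2)]
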